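/- arXiv:2306.03751 — 2 statements merged into one kernel-verified Lean document; each statement's English description precedes it below -/
import Mathlib

section
/- Assume c ≥ 0 and d ≥ 0 almost everywhere, let M > 0, let P be a Borel probability measure on L²(ℤ_p^N) × L²(ℤ_p^N), and let B = {f ∈ L²(ℤ_p^N) : ‖f‖₂ ≤ M}. Fix J₁, J₂ ∈ L²(ℤ_p^N), m, n ≥ 0, and φ_1, …, φ_m, θ_1, …, θ_n ∈ L²(ℤ_p^N), and define F : ℝ^m × ℝ^n → ℝ by F(s,t) = ∫_{B×B} exp(−E(v,h) + ⟨J₁ + Σ_{i=1}^m s_i φ_i, v⟩ + ⟨J₂ + Σ_{j=1}^n t_j θ_j, h⟩) dP(v,h). Then the iterated partial derivative ∂_{t_n} ⋯ ∂_{t_1} ∂_{s_m} ⋯ ∂_{s_1} F exists at (s,t) = (0,0) and equals ∫_{B×B} ∏_{i=1}^m ⟨φ_i, v⟩ ∏_{j=1}^n ⟨θ_j, h⟩ exp(−E(v,h) + ⟨J₁, v⟩ + ⟨J₂, h⟩) dP(v,h). (Taking J₁ = J₂ = 0 this expresses the (m+n)-point correlation functions as iterated functional derivatives of the generating functional.)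 -/
open MeasureTheory ENNReal Real

/-- The space `ℤ_p^N`. -/
abbrev PSpace (p : ℕ) [Fact p.Prime] (N : ℕ) := Fin N → ℤ_[p]

/-- `exp(-t)` for `t ∈ [0,∞]`, with `exp(-∞) := 0`. -/
noncomputable def expNeg (t : ℝ≥0∞) : ℝ := if t = ⊤ then 0 else Real.exp (-t.toReal)

/-- The Boltzmann weight `exp(−E(v,h))`, where the quartic terms of the energy functional are
interpreted as elements of `[0,∞]` and `exp(−∞) := 0`. -/
noncomputable def boltzmannWeight {p : ℕ} [Fact p.Prime] {N : ℕ}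
    [MeasurableSpace (PSpace p N)] (μ : Measure (PSpace p N))
    (a b c d : PSpace p N → ℝ) (w : PSpace p N × PSpace p N → ℝ)
    (v h : PSpace p N → ℝ) : ℝ :=
  Real.exp ((∫ x, a x * v x ∂μ) + (∫ x, b x * h x ∂μ) +
      ∫ x, ∫ y, h x * w (x, y) * v y ∂μ ∂μ) *
    expNeg ((∫⁻ x, ENNReal.ofReal (c x * v x ^ 4) ∂μ) +
      ∫⁻ x, ENNReal.ofReal (d x * h x ^ 4) ∂μ)

/-- Partial derivative in the `i`-th coordinate of the first block of variables. -/
noncomputable def pdFst {m n : ℕ} (i : Fin m) (F : (Fin m → ℝ) × (Fin n → ℝ) → ℝ) :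
    (Fin m → ℝ) × (Fin n → ℝ) → ℝ :=
  fun st => deriv (fun r => F (Function.update st.1 i r, st.2)) (st.1 i)

/-- Partial derivative in the `j`-th coordinate of the second block of variables. -/
noncomputable def pdSnd {m n : ℕ} (j : Fin n) (F : (Fin m → ℝ) × (Fin n → ℝ) → ℝ) :
    (Fin m → ℝ) × (Fin n → ℝ) → ℝ :=
  fun st => deriv (fun r => F (st.1, Function.update st.2 j r)) (st.2 j)

/-- The iterated partial derivative `∂_{t_n} ⋯ ∂_{t_1} ∂_{s_m} ⋯ ∂_{s_1} F`. -/
noncomputable def iterPD2 {m n : ℕ} (F : (Fin m → ℝ) × (Fin n → ℝ) → ℝ) :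
    (Fin m → ℝ) × (Fin n → ℝ) → ℝ :=
  (List.finRange n).foldl (fun G j => pdSnd j G)
    ((List.finRange m).foldl (fun G i => pdFst i G) F)

/-! On `B × B` the observables `f ↦ ⟨φ_i, f.1⟩` and `f ↦ ⟨θ_j, f.2⟩` are bounded by `‖φ_i‖ M` and
`‖θ_j‖ M`, and `exp(−E(v,h) + ⟨J₁,v⟩ + ⟨J₂,h⟩)` is bounded and measurable (the quartic terms are
lower semicontinuous by Fatou, everything else is continuous). Hence `F` is the joint moment
generating function of bounded observables against an integrable weight, and every partial
derivative can be taken under the integral by dominated convergence, where it pulls down one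
factor `⟨φ_i, v⟩` or `⟨θ_j, h⟩`. -/

open Filter

section JointMGF

variable {α : Type*} [MeasurableSpace α] {Q : Measure α}

lemma memLp_top_exp {E : α → ℝ} (hE : MemLp E ⊤ Q) : MemLp (fun f => exp (E f)) ⊤ Q := by
  refine memLp_top_of_bound (continuous_exp.comp_aestronglyMeasurable hE.1)
    (exp (lpNorm E ⊤ Q)) ?_
  filter_upwards [ae_le_lpNorm_exponent_top hE] with f hf
  rw [Real.norm_of_nonneg (exp_pos _).le]
  exact exp_le_exp.mpr ((le_abs_self _).trans hf)

lemma hasDerivAt_integral_mul_exp_mul_zero {g A : α → ℝ} (hg : Integrable g Q)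
    (hA : MemLp A ⊤ Q) :
    HasDerivAt (fun r => ∫ f, g f * exp (r * A f) ∂Q) (∫ f, A f * g f ∂Q) 0 := by
  set C := lpNorm A ⊤ Q
  have hexp (r : ℝ) : AEStronglyMeasurable (fun f => exp (r * A f)) Q :=
    continuous_exp.comp_aestronglyMeasurable (hA.1.const_mul r)
  have key := hasDerivAt_integral_of_dominated_loc_of_deriv_le
    (F := fun r f => g f * exp (r * A f)) (F' := fun r f => A f * g f * exp (r * A f))
    (bound := fun f => C * exp C * |g f|) (Icc_mem_nhds neg_one_lt_zero one_pos)
    (Eventually.of_forall fun r => hg.1.mul (hexp r)) (by simpa using hg)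
    ((hA.1.mul hg.1).mul (hexp 0)) ?_ (hg.abs.const_mul _) ?_
  · simpa using key.2
  · filter_upwards [ae_le_lpNorm_exponent_top hA] with f hf r hr
    have hC : 0 ≤ C := (norm_nonneg _).trans hf
    have hrA : r * A f ≤ C :=
      calc r * A f ≤ |r| * ‖A f‖ := by rw [Real.norm_eq_abs, ← abs_mul]; exact le_abs_self _
        _ ≤ 1 * C := by gcongr; exact abs_le.mpr hr
        _ = C := one_mul C
    rw [norm_mul, norm_mul, Real.norm_of_nonneg (exp_pos _).le, Real.norm_eq_abs (g f)]
    calc ‖A f‖ * |g f| * exp (r * A f) ≤ C * |g f| * exp C := by gcongr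
      _ = C * exp C * |g f| := by ring
  · refine Eventually.of_forall fun f r _ => ?_
    simpa [mul_comm, mul_left_comm, mul_assoc] using
      (((hasDerivAt_id r).mul_const (A f)).exp).const_mul (g f)

lemma sum_update_mul {ι : Type*} [Fintype ι] [DecidableEq ι] (s : ι → ℝ) (i : ι) (r : ℝ)
    (g : ι → ℝ) :
    ∑ k, Function.update s i r k * g k = ∑ k, s k * g k + (r - s i) * g i := by
  have hrest : ∑ k ∈ {i}ᶜ, Function.update s i r k * g k = ∑ k ∈ {i}ᶜ, s k * g k :=
    Finset.sum_congr rfl fun k hk => by rw [Function.update_of_ne (by simpa using hk)]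
  rw [Fintype.sum_eq_add_sum_compl i, Fintype.sum_eq_add_sum_compl i (fun k => s k * g k), hrest,
    Function.update_self]
  ring

variable {m n : ℕ} {A : Fin m → α → ℝ} {B : Fin n → α → ℝ} {K : α → ℝ}

noncomputable def jointMGF (Q : Measure α) (K : α → ℝ) (A : Fin m → α → ℝ) (B : Fin n → α → ℝ)
    (st : (Fin m → ℝ) × (Fin n → ℝ)) : ℝ :=
  ∫ f, K f * exp ((∑ i, st.1 i * A i f) + ∑ j, st.2 j * B j f) ∂Q

lemma jointMGF_zero : jointMGF Q K A B (0, 0) = ∫ f, K f ∂Q := by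
  simp [jointMGF]

lemma integrable_mul_exp_pairing (hK : Integrable K Q) (hA : ∀ i, MemLp (A i) ⊤ Q)
    (hB : ∀ j, MemLp (B j) ⊤ Q) (st : (Fin m → ℝ) × (Fin n → ℝ)) :
    Integrable (fun f => K f * exp ((∑ i, st.1 i * A i f) + ∑ j, st.2 j * B j f)) Q :=
  hK.mul_of_top_left <| memLp_top_exp <|
    (memLp_finsetSum _ fun i _ => (hA i).const_mul _).add
      (memLp_finsetSum _ fun j _ => (hB j).const_mul _)

lemma hasDerivAt_integral_mul_exp_sub_mul {g C : α → ℝ} (hg : Integrable g Q) (hC : MemLp C ⊤ Q)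
    (r₀ : ℝ) :
    HasDerivAt (fun r => ∫ f, g f * exp ((r - r₀) * C f) ∂Q) (∫ f, C f * g f ∂Q) r₀ := by
  have h := hasDerivAt_integral_mul_exp_mul_zero hg hC
  rw [← sub_self r₀] at h
  exact h.comp_sub_const r₀ r₀

lemma pdFst_jointMGF (hK : Integrable K Q) (hA : ∀ i, MemLp (A i) ⊤ Q)
    (hB : ∀ j, MemLp (B j) ⊤ Q) (i : Fin m) :
    pdFst i (jointMGF Q K A B) = jointMGF Q (fun f => A i f * K f) A B := by
  funext st
  have hshift : (fun r => jointMGF Q K A B (Function.update st.1 i r, st.2)) = fun r =>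
      ∫ f, (K f * exp ((∑ i, st.1 i * A i f) + ∑ j, st.2 j * B j f)) *
        exp ((r - st.1 i) * A i f) ∂Q := by
    funext r
    simp only [jointMGF, sum_update_mul, mul_assoc, ← exp_add]
    congr 1; funext f; congr 2; ring
  rw [pdFst, hshift, (hasDerivAt_integral_mul_exp_sub_mul (integrable_mul_exp_pairing hK hA hB st)
    (hA i) _).deriv, jointMGF]
  simp only [mul_assoc]

lemma pdSnd_jointMGF (hK : Integrable K Q) (hA : ∀ i, MemLp (A i) ⊤ Q)
    (hB : ∀ j, MemLp (B j) ⊤ Q) (j : Fin n) :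
    pdSnd j (jointMGF Q K A B) = jointMGF Q (fun f => B j f * K f) A B := by
  funext st
  have hshift : (fun r => jointMGF Q K A B (st.1, Function.update st.2 j r)) = fun r =>
      ∫ f, (K f * exp ((∑ i, st.1 i * A i f) + ∑ j, st.2 j * B j f)) *
        exp ((r - st.2 j) * B j f) ∂Q := by
    funext r
    simp only [jointMGF, sum_update_mul, mul_assoc, ← exp_add]
    congr 1; funext f; congr 2; ring
  rw [pdSnd, hshift, (hasDerivAt_integral_mul_exp_sub_mul (integrable_mul_exp_pairing hK hA hB st)
    (hB j) _).deriv, jointMGF]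
  simp only [mul_assoc]

lemma integrable_list_prod_mul {ι : Type*} {C : ι → α → ℝ} (hK : Integrable K Q)
    (hC : ∀ i, MemLp (C i) ⊤ Q) (L : List ι) :
    Integrable (fun f => (L.map (C · f)).prod * K f) Q := by
  induction L with
  | nil => simpa using hK
  | cons i L ih =>
    simp only [List.map_cons, List.prod_cons, mul_assoc]
    exact ih.mul_of_top_right (hC i)

lemma foldl_pdFst_jointMGF (hA : ∀ i, MemLp (A i) ⊤ Q) (hB : ∀ j, MemLp (B j) ⊤ Q)
    (L : List (Fin m)) (hK : Integrable K Q) :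
    L.foldl (fun G i => pdFst i G) (jointMGF Q K A B) =
      jointMGF Q (fun f => (L.map (A · f)).prod * K f) A B := by
  induction L generalizing K with
  | nil => simp
  | cons i L ih =>
    rw [List.foldl_cons, pdFst_jointMGF hK hA hB,
      ih (K := fun f => A i f * K f) (hK.mul_of_top_right (hA i))]
    simp only [List.map_cons, List.prod_cons, mul_comm, mul_left_comm, mul_assoc]

lemma foldl_pdSnd_jointMGF (hA : ∀ i, MemLp (A i) ⊤ Q) (hB : ∀ j, MemLp (B j) ⊤ Q)
    (L : List (Fin n)) (hK : Integrable K Q) :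
    L.foldl (fun G j => pdSnd j G) (jointMGF Q K A B) =
      jointMGF Q (fun f => (L.map (B · f)).prod * K f) A B := by
  induction L generalizing K with
  | nil => simp
  | cons j L ih =>
    rw [List.foldl_cons, pdSnd_jointMGF hK hA hB,
      ih (K := fun f => B j f * K f) (hK.mul_of_top_right (hB j))]
    simp only [List.map_cons, List.prod_cons, mul_comm, mul_left_comm, mul_assoc]

lemma iterPD2_jointMGF (hK : Integrable K Q) (hA : ∀ i, MemLp (A i) ⊤ Q)
    (hB : ∀ j, MemLp (B j) ⊤ Q) :
    iterPD2 (jointMGF Q K A B) =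
      jointMGF Q (fun f => (∏ j, B j f) * ((∏ i, A i f) * K f)) A B := by
  rw [iterPD2, foldl_pdFst_jointMGF hA hB _ hK,
    foldl_pdSnd_jointMGF hA hB _ (integrable_list_prod_mul hK hA _)]
  simp only [Fin.prod_univ_def]

end JointMGF

section L2

variable {X : Type*} [MeasurableSpace X] {μ : Measure X}

lemma MeasureTheory.Lp.ae_norm_le_norm_top (f : Lp ℝ ⊤ μ) : ∀ᵐ x ∂μ, ‖f x‖ ≤ ‖f‖ := by
  have h := ae_le_lpNorm_exponent_top (Lp.memLp f)
  rwa [← toReal_eLpNorm (Lp.aestronglyMeasurable f), ← Lp.norm_def] at h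

lemma integral_mul_eq_inner_toLp {g : X → ℝ} (hg : MemLp g 2 μ) (v : Lp ℝ 2 μ) :
    ∫ x, g x * v x ∂μ = inner ℝ (hg.toLp g) v := by
  rw [L2.inner_def]
  refine integral_congr_ae ?_
  filter_upwards [hg.coeFn_toLp] with x hx
  simp [hx, mul_comm]

lemma continuous_integral_mul {g : X → ℝ} (hg : MemLp g 2 μ) :
    Continuous fun v : Lp ℝ 2 μ => ∫ x, g x * v x ∂μ := by
  simp_rw [integral_mul_eq_inner_toLp hg]
  exact continuous_const.inner continuous_id

lemma abs_integral_mul_le {g : X → ℝ} (hg : MemLp g 2 μ) (v : Lp ℝ 2 μ) :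
    |∫ x, g x * v x ∂μ| ≤ (eLpNorm g 2 μ).toReal * ‖v‖ := by
  rw [integral_mul_eq_inner_toLp hg, ← Lp.norm_toLp g hg]
  exact abs_real_inner_le_norm _ _

lemma integral_add_sum_mul {ι : Type*} (s : Finset ι) (J g : Lp ℝ 2 μ) (φ : ι → Lp ℝ 2 μ)
    (c : ι → ℝ) :
    ∫ x, (J x + ∑ i ∈ s, c i * φ i x) * g x ∂μ =
      ∫ x, J x * g x ∂μ + ∑ i ∈ s, c i * ∫ x, φ i x * g x ∂μ := by
  have hint (u : Lp ℝ 2 μ) : Integrable (fun x => u x * g x) μ :=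
    (Lp.memLp u).integrable_mul (Lp.memLp g)
  simp_rw [add_mul, Finset.sum_mul, mul_assoc]
  rw [integral_add (hint J) (integrable_finsetSum _ fun i _ => (hint (φ i)).const_mul _),
    integral_finsetSum _ fun i _ => (hint (φ i)).const_mul _]
  simp_rw [integral_const_mul]

lemma memLp_two_of_top [IsFiniteMeasure μ] (f : Lp ℝ ⊤ μ) : MemLp f 2 μ :=
  (Lp.memLp f).mono_exponent le_top

lemma memLp_top_integral_mul {β : Type*} [TopologicalSpace β] [MeasurableSpace β]
    [OpensMeasurableSpace β] {Q : Measure β} [IsFiniteMeasure Q] {g : X → ℝ} (hg : MemLp g 2 μ)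
    {proj : β → Lp ℝ 2 μ} (hproj : Continuous proj) {M : ℝ} (hM : ∀ᵐ f ∂Q, ‖proj f‖ ≤ M) :
    MemLp (fun f => ∫ x, g x * proj f x ∂μ) ⊤ Q := by
  refine memLp_top_of_bound ((continuous_integral_mul hg).comp hproj).aestronglyMeasurable
    ((eLpNorm g 2 μ).toReal * M) ?_
  filter_upwards [hM] with f hf
  exact (abs_integral_mul_le hg _).trans (by gcongr)

lemma integral_abs_le_norm [IsProbabilityMeasure μ] (f : Lp ℝ 2 μ) : ∫ x, |f x| ∂μ ≤ ‖f‖ := by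
  have h := eLpNorm_le_eLpNorm_of_exponent_le (p := 1) (q := 2) (μ := μ) one_le_two
    (Lp.aestronglyMeasurable f)
  rw [eLpNorm_one_eq_lintegral_enorm] at h
  simp_rw [← Real.norm_eq_abs]
  rw [Lp.norm_def, integral_norm_eq_lintegral_enorm (Lp.aestronglyMeasurable f)]
  exact ENNReal.toReal_mono (Lp.eLpNorm_ne_top f) h

end L2

section KernelForm

variable {X : Type*} [MeasurableSpace X] {μ : Measure X} [IsProbabilityMeasure μ]
  (w : Lp ℝ ⊤ (μ.prod μ))

lemma integrable_kernel_integrand (h v : Lp ℝ 2 μ) :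
    Integrable (fun z : X × X => h z.1 * w z * v z.2) (μ.prod μ) := by
  have hL1 (u : Lp ℝ 2 μ) : Integrable u μ := (Lp.memLp u).integrable one_le_two
  refine (((hL1 h).mul_prod (hL1 v)).mul_of_top_left (Lp.memLp w)).congr ?_
  exact Eventually.of_forall fun z => by simp only [Pi.mul_apply]; ring

lemma integral_kernel_eq_prod (h v : Lp ℝ 2 μ) :
    ∫ x, ∫ y, h x * w (x, y) * v y ∂μ ∂μ = ∫ z, h z.1 * w z * v z.2 ∂(μ.prod μ) :=
  (integral_prod _ (integrable_kernel_integrand w h v)).symm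

lemma abs_integral_kernel_le (h v : Lp ℝ 2 μ) :
    |∫ x, ∫ y, h x * w (x, y) * v y ∂μ ∂μ| ≤ ‖w‖ * ‖h‖ * ‖v‖ := by
  rw [integral_kernel_eq_prod, ← Real.norm_eq_abs]
  have hbound : ∀ᵐ z ∂(μ.prod μ), ‖h z.1 * w z * v z.2‖ ≤ ‖w‖ * (|h z.1| * |v z.2|) := by
    filter_upwards [Lp.ae_norm_le_norm_top w] with z hz
    rw [norm_mul, norm_mul, Real.norm_eq_abs, Real.norm_eq_abs]
    calc |h z.1| * ‖w z‖ * |v z.2| ≤ |h z.1| * ‖w‖ * |v z.2| := by gcongr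
      _ = ‖w‖ * (|h z.1| * |v z.2|) := by ring
  calc ‖∫ z, h z.1 * w z * v z.2 ∂(μ.prod μ)‖
      ≤ ∫ z, ‖w‖ * (|h z.1| * |v z.2|) ∂(μ.prod μ) := norm_integral_le_of_norm_le
        ((((Lp.memLp h).integrable one_le_two).abs.mul_prod
          ((Lp.memLp v).integrable one_le_two).abs).const_mul _) hbound
    _ = ‖w‖ * ((∫ x, |h x| ∂μ) * ∫ y, |v y| ∂μ) := by
        rw [integral_const_mul, integral_prod_mul (fun x => |h x|) (fun y => |v y|)]
    _ ≤ ‖w‖ * (‖h‖ * ‖v‖) := by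
        refine mul_le_mul_of_nonneg_left ?_ (norm_nonneg _)
        exact mul_le_mul (integral_abs_le_norm h) (integral_abs_le_norm v)
          (integral_nonneg fun y => abs_nonneg _) (norm_nonneg _)
    _ = ‖w‖ * ‖h‖ * ‖v‖ := (mul_assoc _ _ _).symm

lemma integral_kernel_add_left (h₁ h₂ v : Lp ℝ 2 μ) :
    ∫ x, ∫ y, (h₁ + h₂) x * w (x, y) * v y ∂μ ∂μ =
      ∫ x, ∫ y, h₁ x * w (x, y) * v y ∂μ ∂μ + ∫ x, ∫ y, h₂ x * w (x, y) * v y ∂μ ∂μ := by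
  simp only [integral_kernel_eq_prod]
  rw [← integral_add (integrable_kernel_integrand w h₁ v) (integrable_kernel_integrand w h₂ v)]
  refine integral_congr_ae ?_
  filter_upwards [Measure.quasiMeasurePreserving_fst.ae_eq_comp (Lp.coeFn_add h₁ h₂)] with z hz
  simp only [Function.comp_apply, Pi.add_apply] at hz
  rw [hz]; ring

lemma integral_kernel_add_right (h v₁ v₂ : Lp ℝ 2 μ) :
    ∫ x, ∫ y, h x * w (x, y) * (v₁ + v₂) y ∂μ ∂μ =
      ∫ x, ∫ y, h x * w (x, y) * v₁ y ∂μ ∂μ + ∫ x, ∫ y, h x * w (x, y) * v₂ y ∂μ ∂μ := by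
  simp only [integral_kernel_eq_prod]
  rw [← integral_add (integrable_kernel_integrand w h v₁) (integrable_kernel_integrand w h v₂)]
  refine integral_congr_ae ?_
  filter_upwards [Measure.quasiMeasurePreserving_snd.ae_eq_comp (Lp.coeFn_add v₁ v₂)] with z hz
  simp only [Function.comp_apply, Pi.add_apply] at hz
  rw [hz]; ring

lemma integral_kernel_smul_left (c : ℝ) (h v : Lp ℝ 2 μ) :
    ∫ x, ∫ y, (c • h) x * w (x, y) * v y ∂μ ∂μ = c * ∫ x, ∫ y, h x * w (x, y) * v y ∂μ ∂μ := by
  simp only [integral_kernel_eq_prod]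
  rw [← integral_const_mul]
  refine integral_congr_ae ?_
  filter_upwards [Measure.quasiMeasurePreserving_fst.ae_eq_comp (Lp.coeFn_smul c h)] with z hz
  simp only [Function.comp_apply, Pi.smul_apply, smul_eq_mul] at hz
  rw [hz]; ring

lemma integral_kernel_smul_right (c : ℝ) (h v : Lp ℝ 2 μ) :
    ∫ x, ∫ y, h x * w (x, y) * (c • v) y ∂μ ∂μ = c * ∫ x, ∫ y, h x * w (x, y) * v y ∂μ ∂μ := by
  simp only [integral_kernel_eq_prod]
  rw [← integral_const_mul]
  refine integral_congr_ae ?_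
  filter_upwards [Measure.quasiMeasurePreserving_snd.ae_eq_comp (Lp.coeFn_smul c v)] with z hz
  simp only [Function.comp_apply, Pi.smul_apply, smul_eq_mul] at hz
  rw [hz]; ring

noncomputable def kernelForm : Lp ℝ 2 μ →L[ℝ] Lp ℝ 2 μ →L[ℝ] ℝ :=
  (LinearMap.mk₂ ℝ (fun h v : Lp ℝ 2 μ => ∫ x, ∫ y, h x * w (x, y) * v y ∂μ ∂μ)
    (integral_kernel_add_left w) (integral_kernel_smul_left w)
    (integral_kernel_add_right w) (integral_kernel_smul_right w)).mkContinuous₂ ‖w‖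
    fun h v => (Real.norm_eq_abs _).trans_le (abs_integral_kernel_le w h v)

lemma continuous_integral_kernel :
    Continuous fun f : Lp ℝ 2 μ × Lp ℝ 2 μ => ∫ x, ∫ y, f.2 x * w (x, y) * f.1 y ∂μ ∂μ :=
  (kernelForm w).continuous₂.comp continuous_swap

end KernelForm

section QuarticTerm

variable {X : Type*} [MeasurableSpace X] {μ : Measure X} {p : ℝ≥0∞} [Fact (1 ≤ p)]

/-- Fatou's lemma along an a.e. convergent subsequence of an `Lp`-convergent sequence. -/
lemma lowerSemicontinuous_lintegral_ofReal_mul_pow {e : X → ℝ} (he : AEMeasurable e μ) (k : ℕ) :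
    LowerSemicontinuous fun v : Lp ℝ p μ => ∫⁻ x, ENNReal.ofReal (e x * v x ^ k) ∂μ := by
  refine lowerSemicontinuous_iff_isClosed_preimage.2 fun y =>
    IsSeqClosed.isClosed fun vs v hvs hlim => ?_
  obtain ⟨ns, -, hae⟩ := (tendstoInMeasure_of_tendsto_Lp hlim).exists_seq_tendsto_ae
  calc ∫⁻ x, ENNReal.ofReal (e x * v x ^ k) ∂μ
      = ∫⁻ x, atTop.liminf (fun j => ENNReal.ofReal (e x * vs (ns j) x ^ k)) ∂μ :=
        lintegral_congr_ae <| hae.mono fun x hx =>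
          ((ENNReal.continuous_ofReal.tendsto _).comp ((hx.pow k).const_mul (e x))).liminf_eq.symm
    _ ≤ atTop.liminf fun j => ∫⁻ x, ENNReal.ofReal (e x * vs (ns j) x ^ k) ∂μ :=
        lintegral_liminf_le' fun j => ENNReal.measurable_ofReal.comp_aemeasurable
          (he.mul ((Lp.aestronglyMeasurable _).aemeasurable.pow_const k))
    _ ≤ y := liminf_le_of_frequently_le' (Frequently.of_forall fun j => hvs (ns j))

end QuarticTerm

lemma expNeg_nonneg (t : ℝ≥0∞) : 0 ≤ expNeg t := by
  unfold expNeg; split_ifs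
  exacts [le_rfl, (exp_pos _).le]

lemma expNeg_le_one (t : ℝ≥0∞) : expNeg t ≤ 1 := by
  unfold expNeg; split_ifs
  exacts [zero_le_one, exp_le_one_iff.mpr (neg_nonpos.mpr ENNReal.toReal_nonneg)]

lemma measurable_expNeg : Measurable expNeg :=
  Measurable.ite (measurableSet_singleton ⊤) measurable_const
    (continuous_exp.measurable.comp ENNReal.measurable_toReal.neg)

section BoltzmannWeight

variable {p : ℕ} [Fact p.Prime] {N : ℕ} [MeasurableSpace (PSpace p N)]
  {μ : Measure (PSpace p N)} [IsProbabilityMeasure μ]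
  (a b c d : Lp ℝ ⊤ μ) (w : Lp ℝ ⊤ (μ.prod μ))

/-- Only the Borel structure of `L² × L²` is available, so measurability comes from
(semi)continuity. -/
lemma measurable_boltzmannWeight [MeasurableSpace (Lp ℝ 2 μ × Lp ℝ 2 μ)]
    [OpensMeasurableSpace (Lp ℝ 2 μ × Lp ℝ 2 μ)] :
    Measurable fun f : Lp ℝ 2 μ × Lp ℝ 2 μ => boltzmannWeight μ a b c d w f.1 f.2 := by
  have hquartic (e : Lp ℝ ⊤ μ) := lowerSemicontinuous_lintegral_ofReal_mul_pow (p := 2)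
    (Lp.aestronglyMeasurable e).aemeasurable 4
  refine Measurable.mul ?_ (measurable_expNeg.comp ?_)
  · refine (continuous_exp.comp (Continuous.add (Continuous.add ?_ ?_)
      (continuous_integral_kernel w))).measurable
    · exact (continuous_integral_mul (memLp_two_of_top a)).comp continuous_fst
    · exact (continuous_integral_mul (memLp_two_of_top b)).comp continuous_snd
  · exact (((hquartic c).comp continuous_fst).add ((hquartic d).comp continuous_snd)).measurable

lemma abs_boltzmannWeight_le (v h : Lp ℝ 2 μ) :
    |boltzmannWeight μ a b c d w v h| ≤
      exp ((eLpNorm a 2 μ).toReal * ‖v‖ + (eLpNorm b 2 μ).toReal * ‖h‖ + ‖w‖ * ‖h‖ * ‖v‖) := by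
  rw [boltzmannWeight, abs_mul, abs_exp, abs_of_nonneg (expNeg_nonneg _)]
  refine (mul_le_of_le_one_right (exp_pos _).le (expNeg_le_one _)).trans (exp_le_exp.mpr ?_)
  gcongr
  · exact (le_abs_self _).trans (abs_integral_mul_le (memLp_two_of_top a) v)
  · exact (le_abs_self _).trans (abs_integral_mul_le (memLp_two_of_top b) h)
  · exact (le_abs_self _).trans (abs_integral_kernel_le w h v)

lemma integrable_boltzmannWeight_mul_exp [MeasurableSpace (Lp ℝ 2 μ × Lp ℝ 2 μ)]
    [OpensMeasurableSpace (Lp ℝ 2 μ × Lp ℝ 2 μ)] {Q : Measure (Lp ℝ 2 μ × Lp ℝ 2 μ)}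
    [IsFiniteMeasure Q] {M : ℝ} (hQ : ∀ᵐ f ∂Q, ‖f.1‖ ≤ M ∧ ‖f.2‖ ≤ M) (J₁ J₂ : Lp ℝ 2 μ) :
    Integrable (fun f => boltzmannWeight μ a b c d w f.1 f.2 *
      exp ((∫ x, J₁ x * f.1 x ∂μ) + ∫ x, J₂ x * f.2 x ∂μ)) Q := by
  have hJ : Continuous fun f : Lp ℝ 2 μ × Lp ℝ 2 μ =>
      (∫ x, J₁ x * f.1 x ∂μ) + ∫ x, J₂ x * f.2 x ∂μ :=
    ((continuous_integral_mul (Lp.memLp J₁)).comp continuous_fst).add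
      ((continuous_integral_mul (Lp.memLp J₂)).comp continuous_snd)
  refine Integrable.of_bound ((measurable_boltzmannWeight a b c d w).mul
      (continuous_exp.comp hJ).measurable).aestronglyMeasurable
    (exp ((eLpNorm a 2 μ).toReal * M + (eLpNorm b 2 μ).toReal * M + ‖w‖ * M * M) *
      exp ((eLpNorm J₁ 2 μ).toReal * M + (eLpNorm J₂ 2 μ).toReal * M)) ?_
  filter_upwards [hQ] with f ⟨h1, h2⟩
  have hM : 0 ≤ M := (norm_nonneg _).trans h1
  rw [norm_mul, Real.norm_eq_abs, Real.norm_of_nonneg (exp_pos _).le]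
  gcongr
  · exact (abs_boltzmannWeight_le a b c d w f.1 f.2).trans (by gcongr)
  · exact (le_abs_self _).trans ((abs_integral_mul_le (Lp.memLp J₁) f.1).trans (by gcongr))
  · exact (le_abs_self _).trans ((abs_integral_mul_le (Lp.memLp J₂) f.2).trans (by gcongr))

end BoltzmannWeight

theorem stmt4_general {p : ℕ} [Fact p.Prime] {N : ℕ}
    [MeasurableSpace (PSpace p N)]
    (μ : Measure (PSpace p N)) [IsProbabilityMeasure μ]
    (a b c d : Lp ℝ ⊤ μ) (w : Lp ℝ ⊤ (μ.prod μ))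
    (M : ℝ)
    [MeasurableSpace (Lp ℝ 2 μ × Lp ℝ 2 μ)] [BorelSpace (Lp ℝ 2 μ × Lp ℝ 2 μ)]
    (P : Measure (Lp ℝ 2 μ × Lp ℝ 2 μ)) [IsProbabilityMeasure P]
    (J₁ J₂ : Lp ℝ 2 μ) (m n : ℕ) (φ : Fin m → Lp ℝ 2 μ) (θ : Fin n → Lp ℝ 2 μ) :
    iterPD2 (fun st : (Fin m → ℝ) × (Fin n → ℝ) =>
        ∫ f in {f : Lp ℝ 2 μ × Lp ℝ 2 μ | ‖f.1‖ ≤ M ∧ ‖f.2‖ ≤ M},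
          boltzmannWeight μ (⇑a) (⇑b) (⇑c) (⇑d) (⇑w) (⇑f.1) (⇑f.2) *
            Real.exp ((∫ x, (J₁ x + ∑ i, st.1 i * φ i x) * f.1 x ∂μ) +
              ∫ x, (J₂ x + ∑ j, st.2 j * θ j x) * f.2 x ∂μ) ∂P) (0, 0)
      = ∫ f in {f : Lp ℝ 2 μ × Lp ℝ 2 μ | ‖f.1‖ ≤ M ∧ ‖f.2‖ ≤ M},
          ((∏ i, ∫ x, φ i x * f.1 x ∂μ) * ∏ j, ∫ x, θ j x * f.2 x ∂μ) *
            (boltzmannWeight μ (⇑a) (⇑b) (⇑c) (⇑d) (⇑w) (⇑f.1) (⇑f.2) *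
              Real.exp ((∫ x, J₁ x * f.1 x ∂μ) + ∫ x, J₂ x * f.2 x ∂μ)) ∂P := by
  set S := {f : Lp ℝ 2 μ × Lp ℝ 2 μ | ‖f.1‖ ≤ M ∧ ‖f.2‖ ≤ M}
  have hS : ∀ᵐ f ∂P.restrict S, ‖f.1‖ ≤ M ∧ ‖f.2‖ ≤ M :=
    ae_restrict_mem ((isClosed_le continuous_fst.norm continuous_const).inter
      (isClosed_le continuous_snd.norm continuous_const)).measurableSet
  set K := fun f : Lp ℝ 2 μ × Lp ℝ 2 μ =>
    boltzmannWeight μ (⇑a) (⇑b) (⇑c) (⇑d) (⇑w) (⇑f.1) (⇑f.2) *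
      exp ((∫ x, J₁ x * f.1 x ∂μ) + ∫ x, J₂ x * f.2 x ∂μ)
  have hK : Integrable K (P.restrict S) := integrable_boltzmannWeight_mul_exp a b c d w hS J₁ J₂
  have hF : (fun st : (Fin m → ℝ) × (Fin n → ℝ) =>
        ∫ f in S, boltzmannWeight μ (⇑a) (⇑b) (⇑c) (⇑d) (⇑w) (⇑f.1) (⇑f.2) *
          exp ((∫ x, (J₁ x + ∑ i, st.1 i * φ i x) * f.1 x ∂μ) +
            ∫ x, (J₂ x + ∑ j, st.2 j * θ j x) * f.2 x ∂μ) ∂P) =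
      jointMGF (P.restrict S) K (fun i f => ∫ x, φ i x * f.1 x ∂μ)
        (fun j f => ∫ x, θ j x * f.2 x ∂μ) := by
    funext st
    refine integral_congr_ae (Eventually.of_forall fun f => ?_)
    simp only [K, integral_add_sum_mul, mul_assoc, ← exp_add]
    ring_nf
  rw [hF, iterPD2_jointMGF hK
    (fun i => memLp_top_integral_mul (Lp.memLp (φ i)) continuous_fst (hS.mono fun _ hf => hf.1))
    (fun j => memLp_top_integral_mul (Lp.memLp (θ j)) continuous_snd (hS.mono fun _ hf => hf.2)),
    jointMGF_zero]
  exact integral_congr_ae (Eventually.of_forall fun f => by ring)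

/-- the iterated functional derivatives of the generating functional give the
correlation functions:
`∂_{t_n}⋯∂_{t_1}∂_{s_m}⋯∂_{s_1} F (0,0) = ∫_{B×B} ∏⟨φ_i,v⟩ ∏⟨θ_j,h⟩ e^{−E+⟨J₁,v⟩+⟨J₂,h⟩} dP`
for `F(s,t) = ∫_{B×B} exp(−E(v,h) + ⟨J₁+Σ s_i φ_i, v⟩ + ⟨J₂+Σ t_j θ_j, h⟩) dP`. -/
theorem stmt4 {p : ℕ} [Fact p.Prime] {N : ℕ} (hN : 1 ≤ N)
    [MeasurableSpace (PSpace p N)] [BorelSpace (PSpace p N)]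
    (μ : Measure (PSpace p N)) [IsProbabilityMeasure μ] [μ.IsAddLeftInvariant]
    (a b c d : Lp ℝ ⊤ μ) (w : Lp ℝ ⊤ (μ.prod μ))
    (hc : ∀ᵐ x ∂μ, 0 ≤ c x) (hd : ∀ᵐ x ∂μ, 0 ≤ d x)
    (M : ℝ) (hM : 0 < M)
    [MeasurableSpace (Lp ℝ 2 μ × Lp ℝ 2 μ)] [BorelSpace (Lp ℝ 2 μ × Lp ℝ 2 μ)]
    (P : Measure (Lp ℝ 2 μ × Lp ℝ 2 μ)) [IsProbabilityMeasure P]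
    (J₁ J₂ : Lp ℝ 2 μ) (m n : ℕ) (φ : Fin m → Lp ℝ 2 μ) (θ : Fin n → Lp ℝ 2 μ) :
    iterPD2 (fun st : (Fin m → ℝ) × (Fin n → ℝ) =>
        ∫ f in {f : Lp ℝ 2 μ × Lp ℝ 2 μ | ‖f.1‖ ≤ M ∧ ‖f.2‖ ≤ M},
          boltzmannWeight μ (⇑a) (⇑b) (⇑c) (⇑d) (⇑w) (⇑f.1) (⇑f.2) *
            Real.exp ((∫ x, (J₁ x + ∑ i, st.1 i * φ i x) * f.1 x ∂μ) +
              ∫ x, (J₂ x + ∑ j, st.2 j * θ j x) * f.2 x ∂μ) ∂P) (0, 0)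
      = ∫ f in {f : Lp ℝ 2 μ × Lp ℝ 2 μ | ‖f.1‖ ≤ M ∧ ‖f.2‖ ≤ M},
          ((∏ i, ∫ x, φ i x * f.1 x ∂μ) * ∏ j, ∫ x, θ j x * f.2 x ∂μ) *
            (boltzmannWeight μ (⇑a) (⇑b) (⇑c) (⇑d) (⇑w) (⇑f.1) (⇑f.2) *
              Real.exp ((∫ x, J₁ x * f.1 x ∂μ) + ∫ x, J₂ x * f.2 x ∂μ)) ∂P :=
  stmt4_general μ a b c d w M P J₁ J₂ m n φ θ
end

section
/- (Wick-type 3-partition formula.) Let G ∈ L¹(ℤ_p^N), a, b ∈ L^∞(ℤ_p^N), and F(J₁, J₂) = ⟨G ∗ (b + J₂), a + J₁⟩ for J₁, J₂ ∈ L²(ℤ_p^N). Fix m, n ≥ 0, φ_1, …, φ_m ∈ L²(ℤ_p^N) and θ_1, …, θ_n ∈ L²(ℤ_p^N). Then the iterated partial derivative ∂_{t_n} ⋯ ∂_{t_1} ∂_{s_m} ⋯ ∂_{s_1}, at (s,t) = (0,0), of the map (s,t) ∈ ℝ^m × ℝ^n ↦ exp F(Σ_{i=1}^m s_i φ_i,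 Σ_{j=1}^n t_j θ_j) equals exp(⟨G ∗ b, a⟩) times the sum, over all subsets A ⊆ {1,…,n} and all injective maps σ : {1,…,n} \ A → {1,…,m}, of ∏_{j ∈ A} ⟨G ∗ θ_j, a⟩ · ∏_{j ∈ {1,…,n} \ A} ⟨G ∗ θ_j, φ_{σ(j)}⟩ · ∏_{i ∈ {1,…,m} \ σ({1,…,n} \ A)} ⟨G ∗ b, φ_i⟩. (For n > m the terms with |A| < n − m are absent since no injections exist.) -/
/-
Bilinearity of `(u, v) ↦ ⟨G ∗ u, v⟩` on `L²` (Fubini, legitimate because `G (x - y) u y v x` is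
integrable: Cauchy–Schwarz in `y` and translation invariance of Haar measure) makes
`F(Σ sᵢ φᵢ, Σ tⱼ θⱼ) = c + Σⱼ βⱼ tⱼ + Σᵢ sᵢ (αᵢ + Σⱼ γᵢⱼ tⱼ)` multi-affine. Each `∂_{sᵢ}` of its
exponential brings down `αᵢ + Σⱼ γᵢⱼ tⱼ`, leaving `∏ᵢ (αᵢ + Σⱼ γᵢⱼ tⱼ) · exp (c + Σⱼ βⱼ tⱼ)`
at `s = 0`. Each `∂_{tⱼ}` then hits either the exponential (factor `βⱼ`) or a factor `i` not hit before
(factor `γᵢⱼ`), so the terms are indexed by `A = {j | ∂_{tⱼ} hit the exponential}` and an injection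
`σ : Aᶜ ↪ Fin m`; at `t = 0` the factors never hit contribute `αᵢ`.
-/

open MeasureTheory ENNReal Real

/-- Convolution on the group `ℤ_p^N`: `(G ∗ g)(x) = ∫ G(x−y) g(y) dμ(y)`. -/
noncomputable def conv {p : ℕ} [Fact p.Prime] {N : ℕ}
    [MeasurableSpace (PSpace p N)] (μ : Measure (PSpace p N))
    (G g : PSpace p N → ℝ) : PSpace p N → ℝ :=
  fun x => ∫ y, G (x - y) * g y ∂μ

/-- The functional `F(J₁,J₂) = ⟨G ∗ (b + J₂), a + J₁⟩`. -/
noncomputable def Fgen {p : ℕ} [Fact p.Prime] {N : ℕ}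
    [MeasurableSpace (PSpace p N)] (μ : Measure (PSpace p N))
    (G a b : PSpace p N → ℝ) (J₁ J₂ : PSpace p N → ℝ) : ℝ :=
  ∫ x, conv μ G (fun y => b y + J₂ y) x * (a x + J₁ x) ∂μ

section KernelIntegrability

variable {E : Type*} [AddCommGroup E] [MeasurableSpace E] [MeasurableAdd₂ E] [MeasurableNeg E]
  {μ : Measure E} [SFinite μ] [μ.IsAddLeftInvariant]

theorem integrable_kernel_sub_mul_mul {G u v : E → ℝ} (hG : Integrable G μ) (hu : MemLp u 2 μ)
    (hv : MemLp v 2 μ) :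
    Integrable (fun q : E × E => G (q.1 - q.2) * (u q.2 * v q.1)) (μ.prod μ) := by
  have hv_shift (z : E) : MemLp (fun y => v (z + y)) 2 μ :=
    hv.comp_measurePreserving (measurePreserving_add_left μ z)
  set f : E × E → ℝ := fun q => G q.1 * (u q.2 * v (q.1 + q.2))
  have hf_meas : AEStronglyMeasurable f (μ.prod μ) :=
    (hG.aestronglyMeasurable.comp_quasiMeasurePreserving
      Measure.quasiMeasurePreserving_fst).mul
      ((hu.aestronglyMeasurable.comp_quasiMeasurePreserving
        Measure.quasiMeasurePreserving_snd).mul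
        (hv.aestronglyMeasurable.comp_quasiMeasurePreserving
          (quasiMeasurePreserving_add μ μ)))
  set C := (∫ y, ‖u y‖ ^ (2 : ℝ) ∂μ) ^ (1 / (2 : ℝ)) * (∫ y, ‖v y‖ ^ (2 : ℝ) ∂μ) ^ (1 / (2 : ℝ))
  -- Cauchy–Schwarz in `y`, together with the translation invariance of `‖v‖₂`
  have hCS (z : E) : ∫ y, ‖u y‖ * ‖v (z + y)‖ ∂μ ≤ C := by
    have := integral_mul_norm_le_Lp_mul_Lq (μ := μ) Real.HolderConjugate.two_two
      (by simpa using hu) (by simpa using hv_shift z)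
    rwa [integral_add_left_eq_self (fun y => ‖v y‖ ^ (2 : ℝ)) z] at this
  have hf : Integrable f (μ.prod μ) := by
    refine (integrable_prod_iff hf_meas).2 ⟨.of_forall fun z => ?_, ?_⟩
    · exact (hu.integrable_mul (hv_shift z)).const_mul (G z)
    · refine (hG.norm.mul_const C).mono' hf_meas.norm.integral_prod_right' (.of_forall fun z => ?_)
      simp only [f, norm_mul, integral_const_mul, norm_norm]
      rw [Real.norm_of_nonneg (integral_nonneg fun y => by positivity)]
      exact mul_le_mul_of_nonneg_left (hCS z) (norm_nonneg _)
  have : (fun q : E × E => G (q.1 - q.2) * (u q.2 * v q.1)) = f ∘ fun q => (q.1 - q.2, q.2) := by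
    ext q; simp [f]
  rw [this]
  exact ((measurePreserving_sub_prod μ μ).integrable_comp hf.aestronglyMeasurable).2 hf

end KernelIntegrability

namespace PartialInj

open Finset

variable {m n : ℕ}

/- A partial injection `h` with domain in the set `T` of indices `j` already differentiated records
what each `∂_{t_j}` hit: `h j = none` the exponential (factor `β j`), `h j = some i` the factor
`sCoeff i` (factor `γ i j`). -/
def IsPartialInjOn (T : Finset (Fin n)) (h : Fin n → Option (Fin m)) : Prop :=
  (∀ j ∉ T, h j = none) ∧ ∀ j j' i, h j = some i → h j' = some i → j = j'

instance (T : Finset (Fin n)) : DecidablePred (IsPartialInjOn (m := m) T) :=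
  fun _ => by unfold IsPartialInjOn; infer_instance

def optRange (h : Fin n → Option (Fin m)) : Finset (Fin m) :=
  univ.filter fun i => ∃ j, h j = some i

theorem optRange_update_some {h : Fin n → Option (Fin m)} {j₀ : Fin n} (h₀ : h j₀ = none)
    (i : Fin m) :
    optRange (Function.update h j₀ (some i)) = insert i (optRange h) := by
  ext i'
  simp only [optRange, mem_filter, mem_univ, true_and, mem_insert, Function.update_apply]
  constructor
  · rintro ⟨j, hj⟩
    split_ifs at hj with hj₀
    · exact .inl (Option.some_inj.1 hj).symm
    · exact .inr ⟨j, hj⟩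
  · rintro (rfl | ⟨j, hj⟩)
    · exact ⟨j₀, by simp⟩
    · exact ⟨j, by rw [if_neg (by rintro rfl; simp_all)]; exact hj⟩

theorem isPartialInjOn_insert_update_iff {T : Finset (Fin n)} {j₀ : Fin n}
    {h : Fin n → Option (Fin m)} (h₀ : h j₀ = none) (o : Option (Fin m)) :
    IsPartialInjOn (insert j₀ T) (Function.update h j₀ o)
      ↔ IsPartialInjOn T h ∧ o ∈ insertNone (optRange h)ᶜ := by
  cases o with
  | none =>
    simp only [IsPartialInjOn, Function.update_apply, mem_insert, none_mem_insertNone, and_true]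
    grind
  | some i =>
    simp only [IsPartialInjOn, optRange, Function.update_apply, mem_insert, mem_insertNone,
      Option.mem_def, Option.some_inj, forall_eq', mem_compl, mem_filter, mem_univ, true_and]
    grind

variable (β : Fin n → ℝ) (γ : Fin m → Fin n → ℝ)

def weight (T : Finset (Fin n)) (h : Fin n → Option (Fin m)) : ℝ :=
  ∏ j ∈ T, (h j).elim (β j) (γ · j)

theorem weight_insert_update {T : Finset (Fin n)} {j₀ : Fin n} (hj₀ : j₀ ∉ T)
    (h : Fin n → Option (Fin m)) (o : Option (Fin m)) :
    weight β γ (insert j₀ T) (Function.update h j₀ o)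
      = o.elim (β j₀) (γ · j₀) * weight β γ T h := by
  rw [weight, prod_insert hj₀, Function.update_self]
  congr 1
  exact prod_congr rfl fun j hj => by rw [Function.update_of_ne (by rintro rfl; exact hj₀ hj)]

theorem sum_isPartialInjOn_insert {T : Finset (Fin n)} {j₀ : Fin n} (hj₀ : j₀ ∉ T)
    (f : Finset (Fin m) → ℝ) :
    ∑ h ∈ univ.filter (IsPartialInjOn (insert j₀ T)), weight β γ (insert j₀ T) h * f (optRange h)
      = ∑ h ∈ univ.filter (IsPartialInjOn T), weight β γ T h *
          (β j₀ * f (optRange h) + ∑ i ∈ (optRange h)ᶜ, γ i j₀ * f (insert i (optRange h))) := by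
  have hnone {h : Fin n → Option (Fin m)} (hh : h ∈ univ.filter (IsPartialInjOn T)) : h j₀ = none :=
    (mem_filter.1 hh).2.1 j₀ hj₀
  have hsplit (h) (hh : h ∈ univ.filter (IsPartialInjOn T)) :
      weight β γ T h
          * (β j₀ * f (optRange h) + ∑ i ∈ (optRange h)ᶜ, γ i j₀ * f (insert i (optRange h)))
        = ∑ o ∈ insertNone (optRange h)ᶜ, weight β γ (insert j₀ T) (Function.update h j₀ o)
            * f (optRange (Function.update h j₀ o)) := by
    have hupd : Function.update h j₀ none = h := by rw [← hnone hh, Function.update_eq_self]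
    simp only [sum_insertNone, weight_insert_update β γ hj₀, optRange_update_some (hnone hh), hupd,
      Option.elim, mul_add, mul_sum]
    congr 1
    · ring
    · exact sum_congr rfl fun _ _ => by ring
  rw [sum_congr rfl hsplit, sum_sigma']
  refine (sum_nbij' (fun x => Function.update x.1 j₀ x.2)
    (fun h => ⟨Function.update h j₀ none, h j₀⟩) ?_ ?_ ?_ ?_ ?_).symm
  · rintro ⟨h, o⟩ hx
    rw [mem_sigma] at hx
    simpa using (isPartialInjOn_insert_update_iff (hnone hx.1) o).2 ⟨(mem_filter.1 hx.1).2, hx.2⟩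
  · intro h hh
    have := (isPartialInjOn_insert_update_iff (T := T) (h := Function.update h j₀ none)
      (Function.update_self ..) (h j₀)).1 (by simpa using hh)
    simpa [mem_sigma] using this
  · rintro ⟨h, o⟩ hx
    rw [mem_sigma] at hx
    simp [← hnone hx.1]
  · intro h _
    simp
  · intros
    rfl

variable {β γ}

theorem filter_isPartialInjOn_empty :
    univ.filter (IsPartialInjOn (m := m) (∅ : Finset (Fin n))) = {fun _ => none} := by
  ext h
  simp only [mem_filter, mem_univ, true_and, mem_singleton, IsPartialInjOn, notMem_empty,
    not_false_eq_true, forall_const]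
  exact ⟨fun hh => funext hh.1, by rintro rfl; simp⟩

def ofEmbedding (A : Finset (Fin n)) (σ : (Aᶜ : Finset (Fin n)) ↪ Fin m) : Fin n → Option (Fin m) :=
  fun j => if hj : j ∈ Aᶜ then some (σ ⟨j, hj⟩) else none

theorem ofEmbedding_eq_none_iff {A : Finset (Fin n)} {σ : (Aᶜ : Finset (Fin n)) ↪ Fin m}
    {j : Fin n} :
    ofEmbedding A σ j = none ↔ j ∈ A := by
  by_cases hj : j ∈ Aᶜ <;> simp_all [ofEmbedding]

theorem isPartialInjOn_ofEmbedding (A : Finset (Fin n)) (σ : (Aᶜ : Finset (Fin n)) ↪ Fin m) :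
    IsPartialInjOn univ (ofEmbedding A σ) := by
  refine ⟨fun j hj => absurd (mem_univ j) hj, fun j j' i hj hj' => ?_⟩
  unfold ofEmbedding at hj hj'
  split_ifs at hj hj' with h₁ h₂
  exact congrArg Subtype.val (σ.injective (Option.some_inj.1 (hj.trans hj'.symm)))

theorem optRange_ofEmbedding (A : Finset (Fin n)) (σ : (Aᶜ : Finset (Fin n)) ↪ Fin m) :
    optRange (ofEmbedding A σ) = univ.map σ := by
  ext i
  rw [optRange, mem_filter, mem_map]
  simp only [mem_univ, true_and, ofEmbedding]
  constructor
  · rintro ⟨j, hj⟩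
    split_ifs at hj with h
    exact ⟨⟨j, h⟩, Option.some_inj.1 hj⟩
  · rintro ⟨j, hj⟩
    exact ⟨j, by rw [dif_pos j.2, hj]⟩

theorem weight_ofEmbedding (A : Finset (Fin n)) (σ : (Aᶜ : Finset (Fin n)) ↪ Fin m) :
    weight β γ univ (ofEmbedding A σ)
      = (∏ j ∈ A, β j) * ∏ j : (Aᶜ : Finset (Fin n)), γ (σ j) j := by
  rw [weight, ← prod_mul_prod_compl A, ← prod_coe_sort Aᶜ]
  congr 1
  · exact prod_congr rfl fun j hj => by rw [ofEmbedding_eq_none_iff.2 hj]; rfl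
  · exact prod_congr rfl fun j _ => by rw [ofEmbedding, dif_pos j.2]; rfl

variable (β γ)

theorem sum_isPartialInjOn_univ (f : Finset (Fin m) → ℝ) :
    ∑ h ∈ univ.filter (IsPartialInjOn univ), weight β γ univ h * f (optRange h)
      = ∑ A : Finset (Fin n), ∑ σ : (Aᶜ : Finset (Fin n)) ↪ Fin m,
          (∏ j ∈ A, β j) * (∏ j : (Aᶜ : Finset (Fin n)), γ (σ j) j) * f (univ.map σ) := by
  rw [sum_sigma']
  refine (sum_nbij (fun x => ofEmbedding x.1 x.2) (fun x _ => ?_) ?_ ?_ fun x _ => ?_).symm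
  · simpa using isPartialInjOn_ofEmbedding x.1 x.2
  · rintro ⟨A, σ⟩ - ⟨A', σ'⟩ - (he : ofEmbedding A σ = ofEmbedding A' σ')
    obtain rfl : A = A' := by
      ext j
      rw [← ofEmbedding_eq_none_iff (σ := σ), ← ofEmbedding_eq_none_iff (σ := σ'), he]
    refine Sigma.ext rfl (heq_of_eq (DFunLike.ext _ _ fun j => ?_))
    simpa [ofEmbedding, j.2] using congrFun he j
  · intro h hh
    obtain ⟨-, hinj⟩ := (mem_filter.1 hh).2
    have hsome (j : ((univ.filter (h · = none))ᶜ : Finset (Fin n))) : (h j).isSome := by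
      simpa [Option.isSome_iff_ne_none] using j.2
    let σ : ((univ.filter (h · = none))ᶜ : Finset (Fin n)) ↪ Fin m :=
      ⟨fun j => (h j).get (hsome j), fun j j' hjj' => Subtype.ext <|
        hinj _ _ _ (Option.eq_some_of_isSome (hsome j))
          ((Option.eq_some_of_isSome (hsome j')).trans (congrArg some hjj'.symm))⟩
    refine ⟨⟨_, σ⟩, mem_coe.2 (mem_univ _), funext fun j => ?_⟩
    by_cases hj : h j = none
    · rw [hj, ofEmbedding_eq_none_iff]
      simpa using hj
    · show (if hj : j ∈ _ then _ else none) = h j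
      rw [dif_pos (by simpa using hj)]
      exact Option.some_get _
  · rw [weight_ofEmbedding, optRange_ofEmbedding]

end PartialInj

theorem hasDerivAt_sum_update_mul {𝕜 ι : Type*} [NontriviallyNormedField 𝕜] [Fintype ι]
    [DecidableEq ι] (x w : ι → 𝕜) (i : ι) (r : 𝕜) :
    HasDerivAt (fun r => ∑ k, Function.update x i r k * w k) (w i) r := by
  have := HasDerivAt.fun_sum (u := Finset.univ) fun k _ =>
    (hasDerivAt_pi.1 (hasDerivAt_update x i r) k).mul_const (w k)
  simpa [Pi.single_apply] using this

theorem foldl_pdSnd_apply_congr {m n : ℕ} (l : List (Fin n)) {F F' : (Fin m → ℝ) × (Fin n → ℝ) → ℝ}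
    (s : Fin m → ℝ) (hF : ∀ t, F (s, t) = F' (s, t)) (t : Fin n → ℝ) :
    l.foldl (fun F j => pdSnd j F) F (s, t) = l.foldl (fun F j => pdSnd j F) F' (s, t) := by
  induction l generalizing F F' with
  | nil => exact hF t
  | cons j l ih =>
    refine ih fun t => ?_
    change deriv (fun r => F (s, Function.update t j r)) (t j)
      = deriv (fun r => F' (s, Function.update t j r)) (t j)
    simp only [hF]

noncomputable section

namespace MultiAffineExp

open Finset PartialInj

variable {m n : ℕ} (c : ℝ) (α : Fin m → ℝ) (β : Fin n → ℝ) (γ : Fin m → Fin n → ℝ)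

def sCoeff (i : Fin m) (t : Fin n → ℝ) : ℝ := α i + ∑ j, t j * γ i j

def exponent (st : (Fin m → ℝ) × (Fin n → ℝ)) : ℝ :=
  c + ∑ j, st.2 j * β j + ∑ i, st.1 i * sCoeff α γ i st.2

theorem pdFst_mul_exp_exponent (D : (Fin n → ℝ) → ℝ) (i : Fin m) :
    pdFst i (fun st => D st.2 * exp (exponent c α β γ st))
      = fun st => D st.2 * sCoeff α γ i st.2 * exp (exponent c α β γ st) := by
  funext st
  have := (((hasDerivAt_sum_update_mul st.1 (sCoeff α γ · st.2) i (st.1 i)).const_add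
    (c + ∑ j, st.2 j * β j)).exp).const_mul (D st.2)
  simp only [Function.update_eq_self] at this
  simp only [pdFst, exponent]
  rw [this.deriv]
  ring

theorem foldl_pdFst_mul_exp_exponent (l : List (Fin m)) (D : (Fin n → ℝ) → ℝ) :
    l.foldl (fun F i => pdFst i F) (fun st => D st.2 * exp (exponent c α β γ st))
      = fun st => D st.2 * (l.map (sCoeff α γ · st.2)).prod * exp (exponent c α β γ st) := by
  induction l generalizing D with
  | nil => simp
  | cons i l ih =>
    rw [List.foldl_cons, pdFst_mul_exp_exponent, ih (fun t => D t * sCoeff α γ i t)]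
    simp only [List.map_cons, List.prod_cons, mul_assoc]

def coeffProdExp (S : Finset (Fin m)) (t : Fin n → ℝ) : ℝ :=
  (∏ i ∈ S, sCoeff α γ i t) * exp (c + ∑ j, t j * β j)

theorem hasDerivAt_coeffProdExp_update (S : Finset (Fin m)) (t : Fin n → ℝ) (j : Fin n) :
    HasDerivAt (fun r => coeffProdExp c α β γ S (Function.update t j r))
      (β j * coeffProdExp c α β γ S t + ∑ i ∈ S, γ i j * coeffProdExp c α β γ (S.erase i) t)
      (t j) := by
  have hprod := HasDerivAt.fun_finsetProd (u := S) fun i _ =>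
    (hasDerivAt_sum_update_mul t (γ i) j (t j)).const_add (α i)
  have hexp := ((hasDerivAt_sum_update_mul t β j (t j)).const_add c).exp
  have := hprod.fun_mul hexp
  simp only [Function.update_eq_self, smul_eq_mul] at this
  refine this.congr_deriv ?_
  unfold coeffProdExp sCoeff
  rw [add_comm, Finset.sum_mul]
  congr 1
  · ring
  · exact Finset.sum_congr rfl fun i _ => by ring

theorem pdSnd_sum_mul_coeffProdExp {κ : Type*} (K : Finset κ) (w : κ → ℝ) (S : κ → Finset (Fin m))
    (j : Fin n) :
    pdSnd j (fun st : (Fin m → ℝ) × (Fin n → ℝ) => ∑ k ∈ K, w k * coeffProdExp c α β γ (S k) st.2)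
      = fun st => ∑ k ∈ K, w k * (β j * coeffProdExp c α β γ (S k) st.2
          + ∑ i ∈ S k, γ i j * coeffProdExp c α β γ ((S k).erase i) st.2) := by
  funext st
  exact (HasDerivAt.fun_sum fun k _ =>
    (hasDerivAt_coeffProdExp_update c α β γ (S k) st.2 j).const_mul (w k)).deriv

theorem foldl_pdSnd_coeffProdExp {l : List (Fin n)} (hl : l.Nodup) :
    l.foldl (fun F j => pdSnd j F)
        (fun st : (Fin m → ℝ) × (Fin n → ℝ) => coeffProdExp c α β γ univ st.2)
      = fun st => ∑ h ∈ univ.filter (IsPartialInjOn l.toFinset),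
          weight β γ l.toFinset h * coeffProdExp c α β γ (optRange h)ᶜ st.2 := by
  induction l using List.reverseRecOn with
  | nil =>
    rw [List.toFinset_nil, filter_isPartialInjOn_empty]
    simp [weight, optRange]
  | append_singleton l j ih =>
    rw [List.nodup_append] at hl
    have hj : j ∉ l.toFinset := fun hmem => hl.2.2 j (List.mem_toFinset.1 hmem) j (by simp) rfl
    rw [List.foldl_append, ih hl.1, List.foldl_cons, List.foldl_nil, pdSnd_sum_mul_coeffProdExp]
    funext st
    have hT : (l ++ [j]).toFinset = insert j l.toFinset := by ext; simp
    rw [hT, sum_isPartialInjOn_insert β γ hj (fun R => coeffProdExp c α β γ Rᶜ st.2)]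
    simp only [compl_insert]

theorem coeffProdExp_zero (S : Finset (Fin m)) :
    coeffProdExp c α β γ S 0 = (∏ i ∈ S, α i) * exp c := by
  simp [coeffProdExp, sCoeff]

theorem iterPD2_exp_exponent :
    iterPD2 (fun st => exp (exponent c α β γ st)) (0, 0)
      = exp c * ∑ A : Finset (Fin n), ∑ σ : (Aᶜ : Finset (Fin n)) ↪ Fin m,
          (∏ j ∈ A, β j) * (∏ j : (Aᶜ : Finset (Fin n)), γ (σ j) j)
            * ∏ i ∈ univ \ univ.map σ, α i := by
  have hslice (t : Fin n → ℝ) :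
      (List.finRange m).foldl (fun F i => pdFst i F) (fun st => exp (exponent c α β γ st)) (0, t)
        = coeffProdExp c α β γ univ t := by
    simpa [exponent, coeffProdExp, Fin.prod_univ_def] using
      congrFun (foldl_pdFst_mul_exp_exponent c α β γ _ fun _ => 1) (0, t)
  rw [iterPD2, foldl_pdSnd_apply_congr _ 0 (F' := fun st => coeffProdExp c α β γ univ st.2) hslice,
    foldl_pdSnd_coeffProdExp c α β γ (List.nodup_finRange n), List.toFinset_finRange,
    ← sum_isPartialInjOn_univ β γ (fun R => ∏ i ∈ univ \ R, α i), mul_sum]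
  refine sum_congr rfl fun h _ => ?_
  rw [coeffProdExp_zero, compl_eq_univ_sdiff]
  ring

end MultiAffineExp

end

theorem memLp_add_sum_mul {Ω ι : Type*} [MeasurableSpace Ω] {μ : Measure Ω} {q : ℝ≥0∞}
    [Fintype ι] {u₀ : Ω → ℝ} {u : ι → Ω → ℝ} (hu₀ : MemLp u₀ q μ) (hu : ∀ k, MemLp (u k) q μ)
    (t : ι → ℝ) : MemLp (fun y => u₀ y + ∑ k, t k * u k y) q μ :=
  hu₀.add (memLp_finsetSum _ fun k _ => (hu k).const_mul (t k))

section ConvPairing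

variable {p : ℕ} [Fact p.Prime] {N : ℕ} [MeasurableSpace (PSpace p N)] [BorelSpace (PSpace p N)]
  {μ : Measure (PSpace p N)} [SFinite μ] [μ.IsAddLeftInvariant] {G : PSpace p N → ℝ}

theorem integral_conv_mul_eq_integral_prod (hG : Integrable G μ) {u v : PSpace p N → ℝ}
    (hu : MemLp u 2 μ) (hv : MemLp v 2 μ) :
    ∫ x, conv μ G u x * v x ∂μ = ∫ q, G (q.1 - q.2) * (u q.2 * v q.1) ∂(μ.prod μ) := by
  refine Eq.trans ?_ (integral_integral (f := fun x y => G (x - y) * (u y * v x))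
    (integrable_kernel_sub_mul_mul hG hu hv))
  refine integral_congr_ae (.of_forall fun x => ?_)
  simp only [conv, ← integral_mul_const, mul_assoc]

theorem integral_conv_add_sum_mul {ι : Type*} [Fintype ι] (hG : Integrable G μ)
    {u₀ v : PSpace p N → ℝ} {u : ι → PSpace p N → ℝ} (hu₀ : MemLp u₀ 2 μ)
    (hu : ∀ k, MemLp (u k) 2 μ)
    (hv : MemLp v 2 μ) (t : ι → ℝ) :
    ∫ x, conv μ G (fun y => u₀ y + ∑ k, t k * u k y) x * v x ∂μ
      = ∫ x, conv μ G u₀ x * v x ∂μ + ∑ k, t k * ∫ x, conv μ G (u k) x * v x ∂μ := by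
  have hexpand (q : PSpace p N × PSpace p N) :
      G (q.1 - q.2) * ((u₀ q.2 + ∑ k, t k * u k q.2) * v q.1)
        = G (q.1 - q.2) * (u₀ q.2 * v q.1) + ∑ k, t k * (G (q.1 - q.2) * (u k q.2 * v q.1)) := by
    simp only [add_mul, mul_add, Finset.sum_mul, Finset.mul_sum]
    exact congrArg _ (Finset.sum_congr rfl fun _ _ => by ring)
  have hint (k : ι) := (integrable_kernel_sub_mul_mul hG (hu k) hv).const_mul (t k)
  simp only [integral_conv_mul_eq_integral_prod hG (memLp_add_sum_mul hu₀ hu t) hv,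
    integral_conv_mul_eq_integral_prod hG hu₀ hv, integral_conv_mul_eq_integral_prod hG (hu _) hv,
    hexpand]
  rw [integral_add (integrable_kernel_sub_mul_mul hG hu₀ hv)
      (integrable_finsetSum _ fun k _ => hint k),
    integral_finsetSum _ fun k _ => hint k]
  simp only [integral_const_mul]

theorem integral_conv_mul_add_sum_mul {ι : Type*} [Fintype ι] (hG : Integrable G μ)
    {u v₀ : PSpace p N → ℝ} {v : ι → PSpace p N → ℝ} (hu : MemLp u 2 μ) (hv₀ : MemLp v₀ 2 μ)
    (hv : ∀ k, MemLp (v k) 2 μ) (s : ι → ℝ) :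
    ∫ x, conv μ G u x * (v₀ x + ∑ k, s k * v k x) ∂μ
      = ∫ x, conv μ G u x * v₀ x ∂μ + ∑ k, s k * ∫ x, conv μ G u x * v k x ∂μ := by
  have hexpand (q : PSpace p N × PSpace p N) :
      G (q.1 - q.2) * (u q.2 * (v₀ q.1 + ∑ k, s k * v k q.1))
        = G (q.1 - q.2) * (u q.2 * v₀ q.1) + ∑ k, s k * (G (q.1 - q.2) * (u q.2 * v k q.1)) := by
    simp only [mul_add, Finset.mul_sum]
    exact congrArg _ (Finset.sum_congr rfl fun _ _ => by ring)
  have hint (k : ι) := (integrable_kernel_sub_mul_mul hG hu (hv k)).const_mul (s k)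
  simp only [integral_conv_mul_eq_integral_prod hG hu (memLp_add_sum_mul hv₀ hv s),
    integral_conv_mul_eq_integral_prod hG hu hv₀, integral_conv_mul_eq_integral_prod hG hu (hv _),
    hexpand]
  rw [integral_add (integrable_kernel_sub_mul_mul hG hu hv₀)
      (integrable_finsetSum _ fun k _ => hint k),
    integral_finsetSum _ fun k _ => hint k]
  simp only [integral_const_mul]

theorem Fgen_eq_exponent (hG : Integrable G μ) {a b : PSpace p N → ℝ} (ha : MemLp a 2 μ)
    (hb : MemLp b 2 μ) {m n : ℕ} {φ : Fin m → PSpace p N → ℝ} {θ : Fin n → PSpace p N → ℝ}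
    (hφ : ∀ i, MemLp (φ i) 2 μ) (hθ : ∀ j, MemLp (θ j) 2 μ) (st : (Fin m → ℝ) × (Fin n → ℝ)) :
    Fgen μ G a b (fun x => ∑ i, st.1 i * φ i x) (fun x => ∑ j, st.2 j * θ j x)
      = MultiAffineExp.exponent (∫ x, conv μ G b x * a x ∂μ) (fun i => ∫ x, conv μ G b x * φ i x ∂μ)
          (fun j => ∫ x, conv μ G (θ j) x * a x ∂μ) (fun i j => ∫ x, conv μ G (θ j) x * φ i x ∂μ)
          st := by
  simp only [Fgen]
  rw [integral_conv_add_sum_mul hG hb hθ (memLp_add_sum_mul ha hφ st.1) st.2,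
    integral_conv_mul_add_sum_mul hG hb ha hφ]
  have hθ_expand (j : Fin n) := integral_conv_mul_add_sum_mul hG (hθ j) ha hφ st.1
  simp only [hθ_expand]
  simp only [MultiAffineExp.exponent, MultiAffineExp.sCoeff, mul_add, Finset.sum_add_distrib,
    Finset.mul_sum]
  rw [Finset.sum_comm (γ := Fin m)]
  simp only [mul_left_comm (st.1 _)]
  ring

end ConvPairing

theorem stmt11_general {p : ℕ} [Fact p.Prime] {N : ℕ}
    [MeasurableSpace (PSpace p N)] [BorelSpace (PSpace p N)]
    (μ : Measure (PSpace p N)) [IsProbabilityMeasure μ] [μ.IsAddLeftInvariant]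
    (G : PSpace p N → ℝ) (hG : Integrable G μ) (a b : Lp ℝ ⊤ μ)
    (m n : ℕ) (φ : Fin m → Lp ℝ 2 μ) (θ : Fin n → Lp ℝ 2 μ) :
    iterPD2 (fun st : (Fin m → ℝ) × (Fin n → ℝ) =>
        Real.exp (Fgen μ G (⇑a) (⇑b)
          (fun x => ∑ i, st.1 i * φ i x) (fun x => ∑ j, st.2 j * θ j x))) (0, 0)
      = Real.exp (∫ x, conv μ G (⇑b) x * a x ∂μ) *
          ∑ A : Finset (Fin n), ∑ σ : ((Aᶜ : Finset (Fin n)) ↪ Fin m),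
            (∏ j ∈ A, ∫ x, conv μ G (⇑(θ j)) x * a x ∂μ) *
              (∏ j : (Aᶜ : Finset (Fin n)), ∫ x, conv μ G (⇑(θ j.1)) x * φ (σ j) x ∂μ) *
                ∏ i ∈ Finset.univ \ Finset.univ.map σ,
                  ∫ x, conv μ G (⇑b) x * φ i x ∂μ := by
  have ha : MemLp a 2 μ := (Lp.memLp a).mono_exponent le_top
  have hb : MemLp b 2 μ := (Lp.memLp b).mono_exponent le_top
  simp only [Fgen_eq_exponent hG ha hb (fun i => Lp.memLp (φ i)) (fun j => Lp.memLp (θ j))]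
  exact MultiAffineExp.iterPD2_exp_exponent _ _ _ _

/-- Wick-type 3-partition formula:
`∂_{t_n}⋯∂_{t_1}∂_{s_m}⋯∂_{s_1} exp F(Σ s_i φ_i, Σ t_j θ_j) |_{(s,t)=(0,0)}` equals
`exp(⟨G∗b, a⟩)` times the sum, over all subsets `A ⊆ {1,…,n}` and injections
`σ : {1,…,n} \ A → {1,…,m}`, of
`∏_{j∈A} ⟨G∗θ_j, a⟩ · ∏_{j∉A} ⟨G∗θ_j, φ_{σ(j)}⟩ · ∏_{i ∉ range σ} ⟨G∗b, φ_i⟩`. -/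
theorem stmt11 {p : ℕ} [Fact p.Prime] {N : ℕ} (hN : 1 ≤ N)
    [MeasurableSpace (PSpace p N)] [BorelSpace (PSpace p N)]
    (μ : Measure (PSpace p N)) [IsProbabilityMeasure μ] [μ.IsAddLeftInvariant]
    (G : PSpace p N → ℝ) (hG : Integrable G μ) (a b : Lp ℝ ⊤ μ)
    (m n : ℕ) (φ : Fin m → Lp ℝ 2 μ) (θ : Fin n → Lp ℝ 2 μ) :
    iterPD2 (fun st : (Fin m → ℝ) × (Fin n → ℝ) =>
        Real.exp (Fgen μ G (⇑a) (⇑b)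
          (fun x => ∑ i, st.1 i * φ i x) (fun x => ∑ j, st.2 j * θ j x))) (0, 0)
      = Real.exp (∫ x, conv μ G (⇑b) x * a x ∂μ) *
          ∑ A : Finset (Fin n), ∑ σ : ((Aᶜ : Finset (Fin n)) ↪ Fin m),
            (∏ j ∈ A, ∫ x, conv μ G (⇑(θ j)) x * a x ∂μ) *
              (∏ j : (Aᶜ : Finset (Fin n)), ∫ x, conv μ G (⇑(θ j.1)) x * φ (σ j) x ∂μ) *
                ∏ i ∈ Finset.univ \ Finset.univ.map σ,
                  ∫ x, conv μ G (⇑b) x * φ i x ∂μ :=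
  stmt11_general μ G hG a b m n φ θ
end
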